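/- With the resonator coefficients f = f_M as defined and g the multiplicative function supported on squarefree integers with g(p) = 1 + f(p)², for every ε > 0 one has Σ_{a ≤ M} Λ₂(a) f(a)/(√a · g(a)) ≪_ε (log M)^{1+ε} as M → ∞, where Λ₂ = μ * log² is the second generalized von Mangoldt function, Λ₂(n) = Σ_{d | n} μ(d)(log(n/d))². -/

import Mathlib

open Filter Finset
open scoped Classical

/-- `L = √(log M · log log M)` for the resonator parameter `M`. -/
noncomputable def resL (M : ℕ) : ℝ := Real.sqrt (Real.log M * Real.log (Real.log M))

/-- The value of the resonator coefficients at a prime `p`: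
`f(p) = L/(√p log p)` if `L² ≤ p ≤ exp((log L)²)`, and `f(p) = 0` otherwise. -/
noncomputable def resFp (M p : ℕ) : ℝ :=
  if resL M ^ 2 ≤ (p : ℝ) ∧ (p : ℝ) ≤ Real.exp (Real.log (resL M) ^ 2) then
    resL M / (Real.sqrt p * Real.log p)
  else 0

/-- The resonator coefficients `f = f_M`: the multiplicative function supported on squarefree
integers determined by its values `resFp` at primes. -/
noncomputable def resF (M n : ℕ) : ℝ :=
  if Squarefree n then ∏ p ∈ n.primeFactors, resFp M p else 0

/-- `Q₁ = Π_p (1 + f(p)² + f(p)/√p)`. -/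
noncomputable def resQ1 (M : ℕ) : ℝ :=
  ∏ᶠ p ∈ {p : ℕ | p.Prime}, (1 + resFp M p ^ 2 + resFp M p / Real.sqrt p)

/-- `Q₂ = Π_p (1 + f(p)²)`. -/
noncomputable def resQ2 (M : ℕ) : ℝ :=
  ∏ᶠ p ∈ {p : ℕ | p.Prime}, (1 + resFp M p ^ 2)

/-- The multiplicative function `g` supported on squarefree integers with `g(p) = 1 + f(p)²`. -/
noncomputable def resG (M n : ℕ) : ℝ :=
  if Squarefree n then ∏ p ∈ n.primeFactors, (1 + resFp M p ^ 2) else 0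

/-- The second generalized von Mangoldt function `Λ₂ = μ * log²`, i.e.
`Λ₂(n) = Σ_{d | n} μ(d) (log(n/d))²`. -/
noncomputable def vonMangoldtTwo (n : ℕ) : ℝ :=
  ∑ d ∈ n.divisors, (ArithmeticFunction.moebius d : ℝ) * Real.log ((n : ℝ) / d) ^ 2

/-!
The identity `Λ₂ = Λ log + Λ ∗ Λ` reduces the sum to the weight `W(n) = Λ(n) f(n) / √n`, which
vanishes off the primes `p ≤ X = exp((log L)²)` and equals `L / p` there. After dropping `g ≥ 1`
the sum is at most `log X · S + S²` with `S = Σ_{n ≤ M} W(n) ≤ L (1 + log X)` by the harmonic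
bound. As `L² = log M · log log M` and `log X = (log L)² ≤ (log log M)²`, this is
`O(log M · (log log M)⁵)`, which is `O((log M)^{1+ε})`.
-/

open ArithmeticFunction
open scoped ArithmeticFunction.zeta ArithmeticFunction.Moebius

theorem vonMangoldt_pmul_log_add_mul_mul_zeta :
    (pmul Λ log + Λ * Λ) * ζ = pmul log log := by
  ext n
  have hlog_sq : Real.log n * Real.log n = ∑ d ∈ n.divisors, Λ d * Real.log n := by
    rw [← Finset.sum_mul, vonMangoldt_sum]
  rw [add_mul, mul_assoc, vonMangoldt_mul_zeta, ArithmeticFunction.add_apply,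
    coe_mul_zeta_apply, mul_apply, pmul_apply, log_apply, hlog_sq,
    ← Nat.sum_divisorsAntidiagonal (fun d _ => (pmul Λ log) d),
    ← Nat.sum_divisorsAntidiagonal (fun d _ => Λ d * Real.log n), ← Finset.sum_add_distrib]
  refine Finset.sum_congr rfl fun x hx => ?_
  obtain ⟨rfl, hn⟩ := Nat.mem_divisorsAntidiagonal.mp hx
  rw [pmul_apply, log_apply, log_apply, ← mul_add, Nat.cast_mul,
    Real.log_mul (by exact_mod_cast left_ne_zero_of_mul hn)
      (by exact_mod_cast right_ne_zero_of_mul hn)]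

theorem moebius_mul_log_pmul_log :
    (μ : ArithmeticFunction ℝ) * pmul log log = pmul Λ log + Λ * Λ := by
  rw [← vonMangoldt_pmul_log_add_mul_mul_zeta, mul_comm, mul_assoc, coe_zeta_mul_coe_moebius,
    mul_one]

theorem vonMangoldtTwo_eq (n : ℕ) : vonMangoldtTwo n = Λ n * Real.log n + (Λ * Λ) n := by
  rw [← log_apply, ← pmul_apply, ← ArithmeticFunction.add_apply, ← moebius_mul_log_pmul_log,
    mul_apply, vonMangoldtTwo,
    Nat.sum_divisorsAntidiagonal (fun d e => (μ : ArithmeticFunction ℝ) d * pmul log log e)]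
  refine Finset.sum_congr rfl fun d hd => ?_
  rw [pmul_apply, log_apply, intCoe_apply, sq, Nat.cast_div (Nat.dvd_of_mem_divisors hd)
    (by exact_mod_cast (Nat.pos_of_mem_divisors hd).ne')]

theorem resFp_nonneg (M p : ℕ) : 0 ≤ resFp M p := by
  unfold resFp
  split_ifs
  · exact div_nonneg (Real.sqrt_nonneg _)
      (mul_nonneg (Real.sqrt_nonneg _) (Real.log_natCast_nonneg p))
  · exact le_rfl

theorem resF_nonneg (M n : ℕ) : 0 ≤ resF M n := by
  unfold resF
  split_ifs
  · exact Finset.prod_nonneg fun p _ => resFp_nonneg M p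
  · exact le_rfl

theorem resF_prime {M p : ℕ} (hp : p.Prime) : resF M p = resFp M p := by
  rw [resF, if_pos hp.squarefree, hp.primeFactors, Finset.prod_singleton]

theorem resF_mul {M d e : ℕ} (h : Squarefree (d * e)) :
    resF M (d * e) = resF M d * resF M e := by
  obtain ⟨hcop, hd, he⟩ := Nat.squarefree_mul_iff.mp h
  rw [resF, resF, resF, if_pos h, if_pos hd, if_pos he,
    Nat.primeFactors_mul hd.ne_zero he.ne_zero, Finset.prod_union hcop.disjoint_primeFactors]

theorem one_le_resG {M n : ℕ} (h : Squarefree n) : 1 ≤ resG M n := by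
  rw [resG, if_pos h]
  exact Finset.one_le_prod fun p _ => le_add_of_nonneg_right (sq_nonneg (resFp M p))

theorem resG_nonneg (M n : ℕ) : 0 ≤ resG M n := by
  by_cases h : Squarefree n
  · exact zero_le_one.trans (one_le_resG h)
  · rw [resG, if_neg h]

theorem vonMangoldt_mul_resF_of_not_prime {M n : ℕ} (hn : ¬ n.Prime) : Λ n * resF M n = 0 := by
  by_cases hsf : Squarefree n
  · rw [vonMangoldt_eq_zero_iff.mpr fun hpow => hn
      (Nat.squarefree_and_prime_pow_iff_prime.mp ⟨hsf, hpow⟩), zero_mul]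
  · rw [resF, if_neg hsf, mul_zero]

noncomputable def resW (M n : ℕ) : ℝ := Λ n * resF M n / Real.sqrt n

theorem resW_eq (M n : ℕ) :
    resW M n = if n.Prime ∧ resL M ^ 2 ≤ (n : ℝ) ∧ (n : ℝ) ≤ Real.exp (Real.log (resL M) ^ 2)
      then resL M / n else 0 := by
  by_cases hp : n.Prime
  · have hn : (1 : ℝ) < n := by exact_mod_cast hp.one_lt
    have hsqrt : Real.sqrt n ^ 2 = n := Real.sq_sqrt (by positivity)
    have hlog : Real.log n ≠ 0 := (Real.log_pos hn).ne'
    have hsqrt0 : Real.sqrt n ≠ 0 := (Real.sqrt_pos.mpr (by positivity)).ne'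
    rw [resW, resF_prime hp, vonMangoldt_apply_prime hp, resFp]
    simp only [hp, true_and]
    split_ifs
    · field_simp
      rw [hsqrt]
    · simp
  · rw [resW, vonMangoldt_mul_resF_of_not_prime hp, zero_div, if_neg (by tauto)]

theorem resW_nonneg (M n : ℕ) : 0 ≤ resW M n := by
  rw [resW_eq]
  split_ifs
  · exact div_nonneg (Real.sqrt_nonneg _) n.cast_nonneg
  · exact le_rfl

theorem resW_le (M n : ℕ) : resW M n ≤ resL M / n := by
  rw [resW_eq]
  split_ifs
  · exact le_rfl
  · exact div_nonneg (Real.sqrt_nonneg _) n.cast_nonneg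

theorem le_exp_of_resW_ne_zero {M n : ℕ} (h : resW M n ≠ 0) :
    (n : ℝ) ≤ Real.exp (Real.log (resL M) ^ 2) := by
  rw [resW_eq] at h
  split_ifs at h with hn
  · exact hn.2.2
  · exact absurd rfl h

theorem sum_resW_le (M N : ℕ) :
    ∑ n ∈ Finset.Icc 1 N, resW M n ≤ resL M * (1 + Real.log (resL M) ^ 2) := by
  set X := Real.exp (Real.log (resL M) ^ 2)
  calc ∑ n ∈ Finset.Icc 1 N, resW M n
      = ∑ n ∈ (Finset.Icc 1 N).filter (· ≤ ⌊X⌋₊), resW M n :=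
        (Finset.sum_filter_of_ne fun n _ h => Nat.le_floor (le_exp_of_resW_ne_zero h)).symm
    _ ≤ ∑ n ∈ Finset.Icc 1 ⌊X⌋₊, resW M n := by
        refine Finset.sum_le_sum_of_subset_of_nonneg (fun n hn => ?_)
          fun n _ _ => resW_nonneg M n
        simp only [Finset.mem_filter, Finset.mem_Icc] at hn ⊢
        exact ⟨hn.1.1, hn.2⟩
    _ ≤ ∑ n ∈ Finset.Icc 1 ⌊X⌋₊, resL M * (n : ℝ)⁻¹ :=
        Finset.sum_le_sum fun n _ => (resW_le M n).trans_eq (div_eq_mul_inv _ _)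
    _ = resL M * harmonic ⌊X⌋₊ := by
        rw [← Finset.mul_sum, harmonic_eq_sum_Icc]
        push_cast
        rfl
    _ ≤ resL M * (1 + Real.log X) :=
        mul_le_mul_of_nonneg_left
          (harmonic_floor_le_one_add_log X (Real.one_le_exp (sq_nonneg _))) (Real.sqrt_nonneg _)
    _ = resL M * (1 + Real.log (resL M) ^ 2) := by rw [Real.log_exp]

theorem sum_Icc_sum_divisorsAntidiagonal_le_sq {R : Type*} [CommSemiring R] [PartialOrder R]
    [IsOrderedRing R] {F : ℕ → R} (hF : ∀ n, 0 ≤ F n) (N : ℕ) :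
    ∑ a ∈ Finset.Icc 1 N, ∑ x ∈ a.divisorsAntidiagonal, F x.1 * F x.2
      ≤ (∑ n ∈ Finset.Icc 1 N, F n) ^ 2 := by
  have hdisj : (Finset.Icc 1 N : Set ℕ).PairwiseDisjoint Nat.divisorsAntidiagonal :=
    fun a _ b _ hab => Finset.disjoint_left.mpr fun x hxa hxb =>
      hab ((Nat.mem_divisorsAntidiagonal.mp hxa).1.symm.trans
        (Nat.mem_divisorsAntidiagonal.mp hxb).1)
  have hsub : (Finset.Icc 1 N).biUnion Nat.divisorsAntidiagonal
      ⊆ Finset.Icc 1 N ×ˢ Finset.Icc 1 N := by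
    intro x hx
    obtain ⟨a, ha, hxa⟩ := Finset.mem_biUnion.mp hx
    obtain ⟨rfl, ha0⟩ := Nat.mem_divisorsAntidiagonal.mp hxa
    have h1 := Nat.le_of_dvd (Nat.pos_of_ne_zero ha0) (dvd_mul_right x.1 x.2)
    have h2 := Nat.le_of_dvd (Nat.pos_of_ne_zero ha0) (dvd_mul_left x.2 x.1)
    simp only [Finset.mem_product, Finset.mem_Icc] at ha ⊢
    exact ⟨⟨Nat.pos_of_ne_zero (left_ne_zero_of_mul ha0), h1.trans ha.2⟩,
      ⟨Nat.pos_of_ne_zero (right_ne_zero_of_mul ha0), h2.trans ha.2⟩⟩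
  rw [← Finset.sum_biUnion hdisj, sq, Finset.sum_mul_sum, ← Finset.sum_product']
  exact Finset.sum_le_sum_of_subset_of_nonneg hsub fun x _ _ => mul_nonneg (hF _) (hF _)

theorem vonMangoldtTwo_nonneg (n : ℕ) : 0 ≤ vonMangoldtTwo n := by
  rw [vonMangoldtTwo_eq, mul_apply]
  exact add_nonneg (mul_nonneg vonMangoldt_nonneg (Real.log_natCast_nonneg n))
    (Finset.sum_nonneg fun x _ => mul_nonneg vonMangoldt_nonneg vonMangoldt_nonneg)

/-- Drop `g ≥ 1`, expand `Λ₂ = Λ log + Λ ∗ Λ`, and split `f(de) = f(d) f(e)` on squarefree `de`. -/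
theorem vonMangoldtTwo_mul_resF_div_le (M a : ℕ) :
    vonMangoldtTwo a * resF M a / (Real.sqrt a * resG M a)
      ≤ Real.log a * resW M a + ∑ x ∈ a.divisorsAntidiagonal, resW M x.1 * resW M x.2 := by
  have hrhs : 0 ≤ Real.log a * resW M a + ∑ x ∈ a.divisorsAntidiagonal, resW M x.1 * resW M x.2 :=
    add_nonneg (mul_nonneg (Real.log_natCast_nonneg a) (resW_nonneg M a))
      (Finset.sum_nonneg fun x _ => mul_nonneg (resW_nonneg M _) (resW_nonneg M _))
  by_cases hsf : Squarefree a
  swap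
  · rwa [resF, if_neg hsf, mul_zero, zero_div]
  have hsqrt : 0 < Real.sqrt a :=
    Real.sqrt_pos.mpr (by exact_mod_cast Nat.pos_of_ne_zero hsf.ne_zero)
  calc vonMangoldtTwo a * resF M a / (Real.sqrt a * resG M a)
      ≤ vonMangoldtTwo a * resF M a / Real.sqrt a :=
        div_le_div_of_nonneg_left (mul_nonneg (vonMangoldtTwo_nonneg a) (resF_nonneg M a)) hsqrt
          (le_mul_of_one_le_right hsqrt.le (one_le_resG hsf))
    _ = Real.log a * resW M a + ∑ x ∈ a.divisorsAntidiagonal, resW M x.1 * resW M x.2 := by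
        rw [vonMangoldtTwo_eq, mul_apply, add_mul, add_div, Finset.sum_mul, Finset.sum_div, resW]
        congr 1
        · ring
        refine Finset.sum_congr rfl fun x hx => ?_
        obtain ⟨rfl, -⟩ := Nat.mem_divisorsAntidiagonal.mp hx
        rw [resF_mul hsf, Nat.cast_mul, Real.sqrt_mul x.1.cast_nonneg, resW, resW]
        ring

theorem sum_vonMangoldtTwo_mul_resF_div_le (M : ℕ) :
    ∑ a ∈ Finset.Icc 1 M, vonMangoldtTwo a * resF M a / (Real.sqrt a * resG M a)
      ≤ Real.log (resL M) ^ 2 * (resL M * (1 + Real.log (resL M) ^ 2))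
        + (resL M * (1 + Real.log (resL M) ^ 2)) ^ 2 := by
  have hlog (a : ℕ) : Real.log a * resW M a ≤ Real.log (resL M) ^ 2 * resW M a := by
    by_cases h : resW M a = 0
    · simp [h]
    refine mul_le_mul_of_nonneg_right ?_ (resW_nonneg M a)
    rcases a.eq_zero_or_pos with rfl | ha
    · simpa using sq_nonneg _
    simpa using Real.log_le_log (by exact_mod_cast ha) (le_exp_of_resW_ne_zero h)
  calc ∑ a ∈ Finset.Icc 1 M, vonMangoldtTwo a * resF M a / (Real.sqrt a * resG M a)
      ≤ ∑ a ∈ Finset.Icc 1 M, (Real.log (resL M) ^ 2 * resW M a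
          + ∑ x ∈ a.divisorsAntidiagonal, resW M x.1 * resW M x.2) :=
        Finset.sum_le_sum fun a _ => (vonMangoldtTwo_mul_resF_div_le M a).trans
          (add_le_add_left (hlog a) _)
    _ = Real.log (resL M) ^ 2 * ∑ n ∈ Finset.Icc 1 M, resW M n
          + ∑ a ∈ Finset.Icc 1 M, ∑ x ∈ a.divisorsAntidiagonal, resW M x.1 * resW M x.2 := by
        rw [Finset.sum_add_distrib, Finset.mul_sum]
    _ ≤ _ := add_le_add
        (mul_le_mul_of_nonneg_left (sum_resW_le M M) (sq_nonneg _))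
        ((sum_Icc_sum_divisorsAntidiagonal_le_sq (resW_nonneg M) M).trans
          (pow_le_pow_left₀ (Finset.sum_nonneg fun n _ => resW_nonneg M n) (sum_resW_le M M) 2))

theorem resL_sq {M : ℕ} (hM : 0 ≤ Real.log (Real.log M)) :
    resL M ^ 2 = Real.log M * Real.log (Real.log M) :=
  Real.sq_sqrt (mul_nonneg (Real.log_natCast_nonneg M) hM)

theorem resL_le_log (M : ℕ) : resL M ≤ Real.log M := by
  have hy := Real.log_natCast_nonneg M
  refine Real.sqrt_le_iff.mpr ⟨hy, ?_⟩
  rw [sq]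
  exact mul_le_mul_of_nonneg_left (Real.log_le_self hy) hy

theorem sum_vonMangoldtTwo_mul_resF_div_le_log_mul {M : ℕ} (hM : 1 ≤ Real.log (Real.log M)) :
    ∑ a ∈ Finset.Icc 1 M, vonMangoldtTwo a * resF M a / (Real.sqrt a * resG M a)
      ≤ 6 * (Real.log M * Real.log (Real.log M) ^ 5) := by
  set y := Real.log M
  set z := Real.log (Real.log M)
  set L := resL M
  have hy : 0 ≤ y := Real.log_natCast_nonneg M
  have hL2 : L ^ 2 = y * z := resL_sq (zero_le_one.trans hM)
  have hLy : L ≤ y := resL_le_log M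
  have hy1 : 1 ≤ y := by
    by_contra! h
    linarith [Real.log_nonpos hy h.le]
  have hL : 1 ≤ L := by
    nlinarith [show 0 ≤ L from Real.sqrt_nonneg _]
  have hℓ : 0 ≤ Real.log L := Real.log_nonneg hL
  have hℓz : Real.log L ≤ z := Real.log_le_log (by linarith) hLy
  have hℓ2 : Real.log L ^ 2 ≤ z ^ 2 := pow_le_pow_left₀ hℓ hℓz 2
  have hS : L * (1 + Real.log L ^ 2) ≤ L * (2 * z ^ 2) :=
    mul_le_mul_of_nonneg_left (by nlinarith) (by linarith)
  have hz45 : z ^ 4 ≤ z ^ 5 := pow_le_pow_right₀ hM (by norm_num)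
  calc _ ≤ Real.log L ^ 2 * (L * (1 + Real.log L ^ 2)) + (L * (1 + Real.log L ^ 2)) ^ 2 :=
        sum_vonMangoldtTwo_mul_resF_div_le M
    _ ≤ z ^ 2 * (L * (2 * z ^ 2)) + (L * (2 * z ^ 2)) ^ 2 := by gcongr
    _ = 2 * L * z ^ 4 + 4 * L ^ 2 * z ^ 4 := by ring
    _ ≤ 2 * y * z ^ 5 + 4 * (y * z) * z ^ 4 := by
        rw [hL2]; gcongr
    _ = 6 * (y * z ^ 5) := by ring

theorem isBigO_mul_log_pow_rpow_one_add (k : ℕ) {ε : ℝ} (hε : 0 < ε) :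
    (fun x : ℝ => x * Real.log x ^ k) =O[atTop] fun x => x ^ (1 + ε) := by
  have hlog : (fun x : ℝ => Real.log x ^ k) =O[atTop] fun x => x ^ ε := by
    simpa only [Real.rpow_natCast] using (isLittleO_log_rpow_rpow_atTop (k : ℝ) hε).isBigO
  refine ((Asymptotics.isBigO_refl (fun x : ℝ => x) atTop).mul hlog).congr' .rfl ?_
  filter_upwards [eventually_gt_atTop 0] with x hx
  rw [Real.rpow_add hx, Real.rpow_one]

theorem isBigO_sum_vonMangoldtTwo_mul_resF_div :
    (fun M : ℕ =>
        ∑ a ∈ Finset.Icc 1 M, vonMangoldtTwo a * resF M a / (Real.sqrt a * resG M a))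
      =O[atTop] fun M : ℕ => Real.log M * Real.log (Real.log M) ^ 5 := by
  refine Asymptotics.IsBigO.of_bound 6 ?_
  filter_upwards [(Real.tendsto_log_atTop.comp
    (Real.tendsto_log_atTop.comp tendsto_natCast_atTop_atTop)).eventually_ge_atTop 1] with M hM
  have hM' : 0 ≤ Real.log (Real.log M) := zero_le_one.trans hM
  have hterm (a : ℕ) : 0 ≤ vonMangoldtTwo a * resF M a / (Real.sqrt a * resG M a) :=
    div_nonneg (mul_nonneg (vonMangoldtTwo_nonneg a) (resF_nonneg M a))
      (mul_nonneg (Real.sqrt_nonneg _) (resG_nonneg M a))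
  rw [Real.norm_of_nonneg (Finset.sum_nonneg fun a _ => hterm a),
    Real.norm_of_nonneg (by positivity)]
  exact sum_vonMangoldtTwo_mul_resF_div_le_log_mul hM

/-- With the resonator coefficients `f = f_M` as defined and `g` the
multiplicative function supported on squarefree integers with `g(p) = 1 + f(p)²`, for every
`ε > 0` one has `Σ_{a ≤ M} Λ₂(a) f(a)/(√a g(a)) ≪_ε (log M)^{1+ε}` as `M → ∞`. -/
theorem resonator_vonMangoldtTwo_sum (ε : ℝ) (hε : 0 < ε) :
    (fun M : ℕ =>
        ∑ a ∈ Finset.Icc 1 M, vonMangoldtTwo a * resF M a / (Real.sqrt a * resG M a))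
      =O[atTop] fun M : ℕ => Real.log M ^ ((1 : ℝ) + ε) :=
  isBigO_sum_vonMangoldtTwo_mul_resF_div.trans ((isBigO_mul_log_pow_rpow_one_add 5 hε).comp_tendsto
    (Real.tendsto_log_atTop.comp tendsto_natCast_atTop_atTop))
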